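/- Let f ∈ L¹(ℝ⁴) be compactly supported and suppose the light ray transform Lf(x,θ) = ∫_ℝ f(s, x+sθ) ds vanishes for all x ∈ ℝ³ and all θ ∈ 𝕊². Then the Fourier transform 𝓕f(τ,ξ) vanishes on the space-like cone {(τ,ξ) : τ² < |ξ|²}. -/

import Mathlib

/-!
Fourier slice argument. A space-like covector `(τ, ξ)` (`|τ| < ‖ξ‖`) satisfies `⟪θ, ξ⟫ = -τ` for
some unit `θ`, since `θ ↦ ⟪θ, ξ⟫` maps the connected sphere onto `[-‖ξ‖, ‖ξ‖]`. The shear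
`(t, x) ↦ (t, x + t • θ)` preserves Lebesgue measure and turns the phase `t τ + ⟪x, ξ⟫` into
`⟪x, ξ⟫`, so by Fubini `𝓕f(τ, ξ)` is the `ℝ³`-Fourier transform of `x ↦ Lf(x, θ)`, which is zero.
-/

noncomputable section
open MeasureTheory

/-- The spacetime Fourier transform on `ℝ⁴ = ℝ_t × ℝ³_x`, with the convention
`𝓕f(τ,ξ) = ∫ e^{−i(tτ + x·ξ)} f(t,x) dt dx`. -/
def spacetimeFourier (f : ℝ × EuclideanSpace ℝ (Fin 3) → ℂ)
    (τ : ℝ) (ξ : EuclideanSpace ℝ (Fin 3)) : ℂ :=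
  ∫ p : ℝ × EuclideanSpace ℝ (Fin 3),
    Complex.exp (-(Complex.I * ((p.1 * τ + inner ℝ p.2 ξ : ℝ) : ℂ))) * f p

open Metric
open scoped RealInnerProductSpace

theorem exists_norm_eq_one_inner_eq {E : Type*} [NormedAddCommGroup E] [InnerProductSpace ℝ E]
    (hE : 1 < Module.rank ℝ E) {ξ : E} {c : ℝ} (hc : |c| ≤ ‖ξ‖) :
    ∃ θ : E, ‖θ‖ = 1 ∧ ⟪θ, ξ⟫ = c := by
  obtain ⟨u, hu, huξ⟩ : ∃ u ∈ sphere (0 : E) 1, ⟪u, ξ⟫ = ‖ξ‖ := by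
    rcases eq_or_ne ξ 0 with rfl | hξ
    · have : Nontrivial E := rank_pos_iff_nontrivial.mp (zero_lt_one.trans hE)
      obtain ⟨u, hu⟩ := (NormedSpace.sphere_nonempty (x := (0 : E))).mpr zero_le_one
      exact ⟨u, hu, by simp⟩
    · refine ⟨‖ξ‖⁻¹ • ξ, by simp [norm_smul, hξ], ?_⟩
      rw [real_inner_smul_left, real_inner_self_eq_norm_sq]
      field_simp
  have hu' : -u ∈ sphere (0 : E) 1 := by simpa using hu
  have hcont : ContinuousOn (fun θ : E => ⟪θ, ξ⟫) (sphere 0 1) :=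
    (continuous_id.inner continuous_const).continuousOn
  obtain ⟨θ, hθ, hθc⟩ := (isPreconnected_sphere hE 0 1).intermediate_value hu' hu hcont
    (by simpa [inner_neg_left, huξ] using abs_le.mp hc)
  exact ⟨θ, by simpa using hθ, hθc⟩

section Shear

variable {α G : Type*} [MeasurableSpace α] [AddGroup G] [MeasurableSpace G] [MeasurableAdd₂ G]
  [MeasurableNeg G]

def MeasurableEquiv.shearAdd (g : α → G) (hg : Measurable g) : α × G ≃ᵐ α × G where
  toEquiv := (Equiv.refl α).prodShear fun a => Equiv.addRight (g a)
  measurable_toFun := measurable_fst.prodMk (measurable_snd.add (hg.comp measurable_fst))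
  measurable_invFun := measurable_fst.prodMk (measurable_snd.add (hg.comp measurable_fst).neg)

@[simp]
theorem MeasurableEquiv.shearAdd_apply (g : α → G) (hg : Measurable g) (p : α × G) :
    MeasurableEquiv.shearAdd g hg p = (p.1, p.2 + g p.1) := rfl

theorem measurePreserving_shearAdd (g : α → G) (hg : Measurable g) (μ : Measure α)
    (ν : Measure G) [SFinite μ] [SFinite ν] [ν.IsAddRightInvariant] :
    MeasurePreserving (MeasurableEquiv.shearAdd g hg) (μ.prod ν) (μ.prod ν) :=
  (MeasurePreserving.id μ).skew_product
    (measurable_snd.add (hg.comp measurable_fst))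
    (ae_of_all _ fun a => (measurePreserving_add_right ν (g a)).map_eq)

end Shear

theorem integrable_exp_neg_I_mul_mul {α : Type*} [MeasurableSpace α] {μ : Measure α}
    {f : α → ℂ} (hf : Integrable f μ) {φ : α → ℝ} (hφ : Measurable φ) :
    Integrable (fun p => Complex.exp (-(Complex.I * (φ p : ℂ))) * f p) μ :=
  hf.bdd_mul (c := 1)
    (by fun_prop)
    (ae_of_all _ fun p => by simp [Complex.norm_exp])

theorem spacetimeFourier_eq_integral_lightRay {f : ℝ × EuclideanSpace ℝ (Fin 3) → ℂ}
    (hf : Integrable f) {τ : ℝ} {ξ θ : EuclideanSpace ℝ (Fin 3)} (hθ : ⟪θ, ξ⟫ = -τ) :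
    spacetimeFourier f τ ξ = ∫ x : EuclideanSpace ℝ (Fin 3),
      Complex.exp (-(Complex.I * (⟪x, ξ⟫ : ℂ))) * ∫ t : ℝ, f (t, x + t • θ) := by
  set F : ℝ × EuclideanSpace ℝ (Fin 3) → ℂ := fun p =>
    Complex.exp (-(Complex.I * ((p.1 * τ + ⟪p.2, ξ⟫ : ℝ) : ℂ))) * f p
  set S := MeasurableEquiv.shearAdd (fun t : ℝ => t • θ) (measurable_id.smul_const θ)
  have hS : MeasurePreserving S (volume.prod volume) (volume.prod volume) :=
    measurePreserving_shearAdd _ _ _ _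
  have hFS : Integrable (F ∘ S) (volume.prod volume) :=
    (hS.integrable_comp_emb S.measurableEmbedding).mpr
      (integrable_exp_neg_I_mul_mul hf (by fun_prop))
  have hphase : ∀ (t : ℝ) (x : EuclideanSpace ℝ (Fin 3)), t * τ + ⟪x + t • θ, ξ⟫ = ⟪x, ξ⟫ := by
    intro t x
    rw [inner_add_left, real_inner_smul_left, hθ]
    ring
  calc spacetimeFourier f τ ξ = ∫ p, F (S p) ∂(volume.prod volume) :=
        (hS.integral_comp' F).symm
    _ = ∫ x, ∫ t, F (S (t, x)) := integral_prod_symm _ hFS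
    _ = _ := by
        simp only [F, S, MeasurableEquiv.shearAdd_apply, hphase, integral_const_mul]

theorem fourier_vanishes_on_spacelike_of_lightRay_eq_zero_general
    (f : ℝ × EuclideanSpace ℝ (Fin 3) → ℂ) (hf : Integrable f)
    (hL : ∀ (x θ : EuclideanSpace ℝ (Fin 3)), ‖θ‖ = 1 → (∫ s : ℝ, f (s, x + s • θ)) = 0)
    (τ : ℝ) (ξ : EuclideanSpace ℝ (Fin 3)) (hsp : τ ^ 2 < ‖ξ‖ ^ 2) :
    spacetimeFourier f τ ξ = 0 := by
  have hτ : |-τ| ≤ ‖ξ‖ := by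
    rw [abs_neg]
    exact (abs_lt_of_sq_lt_sq hsp (norm_nonneg ξ)).le
  obtain ⟨θ, hθ, hθξ⟩ := exists_norm_eq_one_inner_eq (by rw [← Module.finrank_eq_rank]; simp) hτ
  rw [spacetimeFourier_eq_integral_lightRay hf hθξ]
  simp [hL _ θ hθ]

/-- if `f ∈ L¹(ℝ⁴)` is compactly supported and its light ray transform
`Lf(x,θ) = ∫ f(s, x+sθ) ds` vanishes for all `x ∈ ℝ³` and all `θ ∈ 𝕊²`, then `𝓕f`
vanishes on the space-like cone `{(τ,ξ) : τ² < |ξ|²}`. -/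
theorem fourier_vanishes_on_spacelike_of_lightRay_eq_zero
    (f : ℝ × EuclideanSpace ℝ (Fin 3) → ℂ) (hf : Integrable f)
    (hsupp : HasCompactSupport f)
    (hL : ∀ (x θ : EuclideanSpace ℝ (Fin 3)), ‖θ‖ = 1 → (∫ s : ℝ, f (s, x + s • θ)) = 0)
    (τ : ℝ) (ξ : EuclideanSpace ℝ (Fin 3)) (hsp : τ ^ 2 < ‖ξ‖ ^ 2) :
    spacetimeFourier f τ ξ = 0 :=
  fourier_vanishes_on_spacelike_of_lightRay_eq_zero_general f hf hL τ ξ hsp
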